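/- Let I be the ideal of a nearly-complete intersection and α, β positive integers with at least one even. Then I^(α+β) = I^(α) · I^(β). Moreover if both α and β are odd, then I^(α)·I^(β) is strictly contained in I^(α+β). -/

import Mathlib

/-!
Write `𝔭 = (x, y)` and `𝔮 = (xy, F)`. Since `F ≡ -zⁿ (mod 𝔭)`, one gets
`𝔭^s ∩ 𝔮^t = ∑ₖ 𝔭^(s-2k) (xy)^k F^(t-k)` by induction on `s`: for an element of `𝔭^(s+1)`
written in this form for `s`, the lowest `(x, y)`-degree parts of the coefficients form a
syzygy of the monomials `(xy)^k (-zⁿ)^(t-k)`. Such syzygies are combinations of the Koszul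
relations of `xy, zⁿ`, and each Koszul relation lifts to the next step of the filtration
because `-zⁿ - F ∈ 𝔭`.

In this description a generator `𝔭^(α+β-2k) (xy)^k F^(α+β-k)` of `I^(α+β)` is a product of
generators of `I^(α)` and `I^(β)` as soon as `α` or `β` is even. When both are odd and
`α + β = 2j`, every product of generators lies in `𝔭^(2j+1) + (z^(nj+1))`, while
`(xy)^j F^j ∈ I^(α+β)` does not, because of its term `± x^j y^j z^(nj)`.
-/

open MvPolynomial Finset

namespace NearlyCompleteIntersection

variable {K : Type*} [CommRing K]

local notation "𝔭" => Ideal.span {(X 0 : MvPolynomial (Fin 3) K), X 1}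

lemma mem_restrictSupportIdeal_iff {σ R : Type*} [CommSemiring R] {s : Set (σ →₀ ℕ)}
    (hs : IsUpperSet s) {f : MvPolynomial σ R} :
    f ∈ restrictSupportIdeal R s hs ↔ ↑f.support ⊆ s := by
  rw [← Submodule.restrictScalars_mem R, restrictScalars_restrictSupportIdeal,
    mem_restrictSupport_iff]

lemma isUpperSet_xyDegree_ge (s : ℕ) : IsUpperSet {d : Fin 3 →₀ ℕ | s ≤ d 0 + d 1} :=
  fun _ _ hde hd => le_trans hd (add_le_add (hde 0) (hde 1))

lemma monomial_mem_span_X0_X1_pow {s : ℕ} {d : Fin 3 →₀ ℕ} (hd : s ≤ d 0 + d 1) (c : K) :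
    monomial d c ∈ 𝔭 ^ s := by
  have hxy : (X 0 : MvPolynomial (Fin 3) K) ^ d 0 * X 1 ^ d 1 ∈ 𝔭 ^ s :=
    Ideal.pow_le_pow_right hd <| pow_add (𝔭) (d 0) (d 1) ▸
      Ideal.mul_mem_mul (Ideal.pow_mem_pow (Ideal.subset_span (by simp)) _)
        (Ideal.pow_mem_pow (Ideal.subset_span (by simp)) _)
  have hd : monomial d c = C c * X 2 ^ d 2 * (X 0 ^ d 0 * X 1 ^ d 1) := by
    rw [monomial_eq, Finsupp.prod_pow, Fin.prod_univ_three]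
    ring
  exact hd ▸ Ideal.mul_mem_left _ _ hxy

lemma span_X0_X1_pow_eq_restrictSupportIdeal (s : ℕ) :
    𝔭 ^ s = restrictSupportIdeal K _ (isUpperSet_xyDegree_ge s) := by
  apply le_antisymm
  · induction s with
    | zero => intro f _; simp [mem_restrictSupportIdeal_iff]
    | succ s ih =>
      rw [pow_succ, Ideal.mul_le]
      intro f hf g hg
      obtain ⟨a, b, rfl⟩ := Ideal.mem_span_pair.1 hg
      have hX : ∀ (h : MvPolynomial (Fin 3) K) (i : Fin 3), i = 0 ∨ i = 1 →
          h ∈ restrictSupportIdeal K _ (isUpperSet_xyDegree_ge s) →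
          h * X i ∈ restrictSupportIdeal K _ (isUpperSet_xyDegree_ge (s + 1)) := by
        intro h i hi hh
        rw [mem_restrictSupportIdeal_iff] at hh ⊢
        rw [support_mul_X, coe_map, Set.image_subset_iff]
        intro e he
        have : s ≤ e 0 + e 1 := hh he
        rcases hi with rfl | rfl <;> simp <;> omega
      rw [mul_add, ← mul_assoc, ← mul_assoc]
      exact add_mem (hX _ 0 (.inl rfl) (Ideal.mul_mem_right _ _ (ih hf)))
        (hX _ 1 (.inr rfl) (Ideal.mul_mem_right _ _ (ih hf)))
  · intro f hf
    rw [f.as_sum]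
    exact Ideal.sum_mem _ fun d hd =>
      monomial_mem_span_X0_X1_pow ((mem_restrictSupportIdeal_iff _).1 hf hd) _

lemma mem_span_X0_X1_pow_iff {s : ℕ} {f : MvPolynomial (Fin 3) K} :
    f ∈ 𝔭 ^ s ↔ ∀ d ∈ f.support, s ≤ d 0 + d 1 := by
  rw [span_X0_X1_pow_eq_restrictSupportIdeal, mem_restrictSupportIdeal_iff]
  rfl

lemma coeff_eq_zero_of_mem_span_X0_X1_pow {s : ℕ} {f : MvPolynomial (Fin 3) K}
    (hf : f ∈ 𝔭 ^ s) {d : Fin 3 →₀ ℕ} (hd : d 0 + d 1 < s) : coeff d f = 0 :=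
  notMem_support_iff.1 fun h => (mem_span_X0_X1_pow_iff.1 hf d h).not_gt hd

lemma mem_of_X_two_pow_mul_mem {s c : ℕ} {f : MvPolynomial (Fin 3) K}
    (hf : X 2 ^ c * f ∈ 𝔭 ^ s) : f ∈ 𝔭 ^ s := by
  refine mem_span_X0_X1_pow_iff.2 fun d hd => ?_
  have hcoeff : coeff (Finsupp.single 2 c + d) (X 2 ^ c * f) = coeff d f := by
    rw [X_pow_eq_monomial, coeff_monomial_mul, one_mul]
  have := mem_span_X0_X1_pow_iff.1 hf _ (mem_support_iff.2 (hcoeff ▸ mem_support_iff.1 hd))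
  simpa using this

lemma X0_mul_X1_pow_mem (k : ℕ) : (X 0 * X 1 : MvPolynomial (Fin 3) K) ^ k ∈ 𝔭 ^ (2 * k) := by
  rw [pow_mul]
  exact Ideal.pow_mem_pow (pow_two (𝔭) ▸
    Ideal.mul_mem_mul (Ideal.subset_span (by simp)) (Ideal.subset_span (by simp))) k

def xyWeight : Fin 3 → ℕ := ![1, 1, 0]

lemma weight_xyWeight (d : Fin 3 →₀ ℕ) : Finsupp.weight xyWeight d = d 0 + d 1 := by
  simp [Finsupp.weight_apply, Finsupp.sum_fintype, Fin.sum_univ_three, xyWeight]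

lemma weightedHomogeneousComponent_mem_span_X0_X1_pow (s : ℕ) (f : MvPolynomial (Fin 3) K) :
    weightedHomogeneousComponent xyWeight s f ∈ 𝔭 ^ s :=
  mem_span_X0_X1_pow_iff.2 fun d hd =>
    (weight_xyWeight d ▸
      weightedHomogeneousComponent_isWeightedHomogeneous s f (mem_support_iff.1 hd)).ge

lemma sub_weightedHomogeneousComponent_mem {s : ℕ} {f : MvPolynomial (Fin 3) K}
    (hf : f ∈ 𝔭 ^ s) : f - weightedHomogeneousComponent xyWeight s f ∈ 𝔭 ^ (s + 1) := by
  refine mem_span_X0_X1_pow_iff.2 fun d hd => ?_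
  rw [mem_support_iff, coeff_sub, coeff_weightedHomogeneousComponent, weight_xyWeight] at hd
  have hs := mem_span_X0_X1_pow_iff.1 hf d
  split_ifs at hd with h
  · simp at hd
  · rw [sub_zero] at hd
    exact lt_of_le_of_ne (hs (mem_support_iff.2 hd)) (Ne.symm h)

lemma eq_zero_of_isWeightedHomogeneous_of_mem {s : ℕ} {f : MvPolynomial (Fin 3) K}
    (hhom : f.IsWeightedHomogeneous xyWeight s) (hf : f ∈ 𝔭 ^ (s + 1)) : f = 0 := by
  refine support_eq_empty.1 <| Finset.eq_empty_of_forall_notMem fun d hd => ?_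
  have hdeg : d 0 + d 1 = s := weight_xyWeight d ▸ hhom (mem_support_iff.1 hd)
  have := mem_span_X0_X1_pow_iff.1 hf d hd
  omega

lemma X0_mul_X1_pow_mul_X_two_pow_notMem [Nontrivial K] (j m : ℕ) :
    (X 0 * X 1) ^ j * X 2 ^ m ∉ 𝔭 ^ (2 * j + 1) ⊔ Ideal.span {X 2 ^ (m + 1)} := by
  set d : Fin 3 →₀ ℕ := Finsupp.single 0 j + Finsupp.single 1 j + Finsupp.single 2 m
  have hd : (X 0 * X 1) ^ j * X 2 ^ m = (monomial d 1 : MvPolynomial (Fin 3) K) := by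
    simp only [d, mul_pow, X_pow_eq_monomial, monomial_mul, mul_one]
  rw [hd, Submodule.mem_sup]
  rintro ⟨a, ha, b, hb, hab⟩
  obtain ⟨c, rfl⟩ := Ideal.mem_span_singleton.1 hb
  have hcoeff := congrArg (coeff d) hab
  rw [coeff_add, coeff_eq_zero_of_mem_span_X0_X1_pow ha (by simp [d]; omega), X_pow_eq_monomial,
    coeff_monomial_mul', if_neg (fun h => by simpa [d] using h 2), coeff_monomial] at hcoeff
  simp at hcoeff

lemma X_two_pow_dvd_of_dvd_X0_mul_X1_pow_mul [IsDomain K] {n k : ℕ} {p : MvPolynomial (Fin 3) K}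
    (h : X 2 ^ n ∣ (X 0 * X 1) ^ k * p) : X 2 ^ n ∣ p := by
  refine X_prime.pow_dvd_of_dvd_mul_left n (fun hdvd => ?_) h
  rcases X_prime.dvd_or_dvd (X_prime.dvd_of_dvd_pow hdvd) with h0 | h1
  · exact absurd (X_dvd_X.1 h0) (by decide)
  · exact absurd (X_dvd_X.1 h1) (by decide)

lemma pow_sub_pow_mem {n : ℕ} {F : MvPolynomial (Fin 3) K} (hG : F + X 2 ^ n ∈ 𝔭) (m : ℕ) :
    F ^ m - (-X 2 ^ n) ^ m ∈ 𝔭 := by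
  obtain ⟨c, hc⟩ := sub_dvd_pow_sub_pow F (-X 2 ^ n) m
  rw [hc, sub_neg_eq_add]
  exact Ideal.mul_mem_right _ _ hG

noncomputable def xyFPow (G : MvPolynomial (Fin 3) K) (t k : ℕ) : MvPolynomial (Fin 3) K :=
  (X 0 * X 1) ^ k * G ^ (t - k)

lemma xyFPow_mem (G : MvPolynomial (Fin 3) K) (t k : ℕ) : xyFPow G t k ∈ 𝔭 ^ (2 * k) :=
  Ideal.mul_mem_right _ _ (X0_mul_X1_pow_mem k)

lemma xyFPow_sub_xyFPow_mem {n : ℕ} {F : MvPolynomial (Fin 3) K} (hG : F + X 2 ^ n ∈ 𝔭)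
    (t k : ℕ) : xyFPow F t k - xyFPow (-X 2 ^ n) t k ∈ 𝔭 ^ (2 * k + 1) := by
  rw [xyFPow, xyFPow, ← mul_sub, pow_succ]
  exact Ideal.mul_mem_mul (X0_mul_X1_pow_mem k) (pow_sub_pow_mem hG _)

lemma xyFPow_add (G : MvPolynomial (Fin 3) K) {t₁ t₂ k₁ k₂ : ℕ} (h₁ : k₁ ≤ t₁) (h₂ : k₂ ≤ t₂) :
    xyFPow G (t₁ + t₂) (k₁ + k₂) = xyFPow G t₁ k₁ * xyFPow G t₂ k₂ := by
  rw [xyFPow, xyFPow, xyFPow, show t₁ + t₂ - (k₁ + k₂) = (t₁ - k₁) + (t₂ - k₂) by omega]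
  ring

lemma X0_mul_X1_mul_xyFPow (G : MvPolynomial (Fin 3) K) {t k : ℕ} (hk : k < t) :
    X 0 * X 1 * xyFPow G t k = G * xyFPow G t (k + 1) := by
  rw [xyFPow, xyFPow, show t - k = t - (k + 1) + 1 by omega]
  ring

/-- `s - 2 * k` truncates: the coefficient ideal is the whole ring once `2 * k ≥ s`. -/
noncomputable def mixedIdeal (F : MvPolynomial (Fin 3) K) (s t : ℕ) :
    Ideal (MvPolynomial (Fin 3) K) :=
  ∑ k ∈ range (t + 1), 𝔭 ^ (s - 2 * k) * Ideal.span {xyFPow F t k}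

lemma le_mixedIdeal (F : MvPolynomial (Fin 3) K) (s : ℕ) {t k : ℕ} (hk : k ≤ t) :
    𝔭 ^ (s - 2 * k) * Ideal.span {xyFPow F t k} ≤ mixedIdeal F s t := by
  rw [mixedIdeal, Ideal.sum_eq_sup]
  exact Finset.le_sup (f := fun k => 𝔭 ^ (s - 2 * k) * Ideal.span {xyFPow F t k})
    (mem_range.2 (Nat.lt_succ_of_le hk))

lemma mul_xyFPow_mem_mixedIdeal {F c : MvPolynomial (Fin 3) K} {s t k : ℕ} (hk : k ≤ t)
    (hc : c ∈ 𝔭 ^ (s - 2 * k)) : c * xyFPow F t k ∈ mixedIdeal F s t :=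
  le_mixedIdeal F s hk (Ideal.mul_mem_mul hc (Ideal.mem_span_singleton_self _))

lemma mem_mixedIdeal_iff {F g : MvPolynomial (Fin 3) K} {s t : ℕ} :
    g ∈ mixedIdeal F s t ↔ ∃ c : ℕ → MvPolynomial (Fin 3) K,
      (∀ k, c k ∈ 𝔭 ^ (s - 2 * k)) ∧ g = ∑ k ∈ range (t + 1), c k * xyFPow F t k := by
  constructor
  · rw [mixedIdeal, Ideal.sum_eq_sup, Finset.sup_eq_iSup, Submodule.mem_iSup_finset_iff_exists_sum]
    rintro ⟨μ, rfl⟩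
    choose c hc using fun k => Ideal.mem_mul_span_singleton.1 (μ k).2
    exact ⟨c, fun k => (hc k).1, Finset.sum_congr rfl fun k _ => ((hc k).2).symm⟩
  · rintro ⟨c, hc, rfl⟩
    exact Ideal.sum_mem _ fun k hk =>
      mul_xyFPow_mem_mixedIdeal (Nat.le_of_lt_succ (mem_range.1 hk)) (hc k)

lemma mixedIdeal_le_pow (F : MvPolynomial (Fin 3) K) (s t : ℕ) : mixedIdeal F s t ≤ 𝔭 ^ s := by
  rw [mixedIdeal, Ideal.sum_eq_sup, Finset.sup_le_iff]
  intro k _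
  calc 𝔭 ^ (s - 2 * k) * Ideal.span {xyFPow F t k} ≤ 𝔭 ^ (s - 2 * k) * 𝔭 ^ (2 * k) :=
        Ideal.mul_mono_right ((Ideal.span_singleton_le_iff_mem _).2 (xyFPow_mem F t k))
    _ ≤ 𝔭 ^ s := by rw [← pow_add]; exact Ideal.pow_le_pow_right (by omega)

lemma mixedIdeal_zero (F : MvPolynomial (Fin 3) K) (t : ℕ) :
    mixedIdeal F 0 t = Ideal.span {X 0 * X 1, F} ^ t := by
  rw [Ideal.span_insert, ← Ideal.add_eq_sup, add_pow, mixedIdeal]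
  refine Finset.sum_congr rfl fun k hk => ?_
  rw [Ideal.natCast_eq_top (Nat.choose_pos (Nat.le_of_lt_succ (mem_range.1 hk))).ne',
    Ideal.mul_top, Ideal.span_singleton_pow, Ideal.span_singleton_pow,
    Ideal.span_singleton_mul_span_singleton, Nat.zero_sub, pow_zero, one_mul, xyFPow]

lemma mixedIdeal_le_span_pow (F : MvPolynomial (Fin 3) K) (s t : ℕ) :
    mixedIdeal F s t ≤ Ideal.span {X 0 * X 1, F} ^ t := by
  rw [← mixedIdeal_zero]
  exact Finset.sum_le_sum fun k _ => Ideal.mul_mono_left (Ideal.pow_le_pow_right (by omega))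

lemma sum_range_add_single_mul {R : Type*} [Semiring R] (π g : ℕ → R) (r : ℕ) (a : R) :
    ∑ k ∈ range (r + 1), (π + Pi.single r a : ℕ → R) k * g k =
      ∑ k ∈ range (r + 1), π k * g k + a * g r := by
  simp [add_mul, sum_add_distrib, Pi.single_apply]

lemma neg_X_two_pow_dvd_of_sum_eq_zero [IsDomain K] {n t r : ℕ} (hr : r < t)
    {π : ℕ → MvPolynomial (Fin 3) K}
    (h : ∑ k ∈ range (r + 2), π k * xyFPow (-X 2 ^ n) t k = 0) : -X 2 ^ n ∣ π (r + 1) := by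
  set w : MvPolynomial (Fin 3) K := -X 2 ^ n
  have hw : w ≠ 0 := neg_ne_zero.2 (pow_ne_zero _ (X_ne_zero 2))
  rw [sum_range_succ, add_eq_zero_iff_neg_eq] at h
  have hlow : w ^ (t - r) ∣ ∑ k ∈ range (r + 1), π k * xyFPow w t k :=
    dvd_sum fun k hk => dvd_mul_of_dvd_right
      (dvd_mul_of_dvd_right (pow_dvd_pow w (by have := mem_range.1 hk; omega)) _) _
  rw [← dvd_neg, h, xyFPow, ← mul_assoc, show t - r = t - (r + 1) + 1 by omega, pow_succ',
    mul_dvd_mul_iff_right (pow_ne_zero _ hw), mul_comm, neg_dvd] at hlow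
  exact neg_dvd.2 (X_two_pow_dvd_of_dvd_X0_mul_X1_pow_mul hlow)

theorem sum_mul_xyFPow_mem_mixedIdeal_succ [IsDomain K] {n : ℕ} {F : MvPolynomial (Fin 3) K}
    (hG : F + X 2 ^ n ∈ 𝔭) {s t r : ℕ} (hrt : r ≤ t) {π : ℕ → MvPolynomial (Fin 3) K}
    (hπ : ∀ k ≤ r, π k ∈ 𝔭 ^ (s - 2 * k))
    (h : ∑ k ∈ range (r + 1), π k * xyFPow (-X 2 ^ n) t k = 0) :
    ∑ k ∈ range (r + 1), π k * xyFPow F t k ∈ mixedIdeal F (s + 1) t := by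
  induction r generalizing π with
  | zero =>
    simp only [zero_add, range_one, sum_singleton] at h ⊢
    rw [(mul_eq_zero.1 h).resolve_right (by simp [xyFPow, X_ne_zero]), zero_mul]
    exact zero_mem _
  | succ r ih =>
    -- the top coefficient is `-zⁿ ρ`; trading it for `ρ xy` in degree `r` costs
    -- `ρ (-zⁿ - F) (xy)^(r+1) F^(t-r-1)`, which already lies in the next filtration step
    obtain ⟨ρ, hρ⟩ := neg_X_two_pow_dvd_of_sum_eq_zero hrt h
    have hρmem : ρ ∈ 𝔭 ^ (s - 2 * (r + 1)) :=
      mem_of_X_two_pow_mul_mem (neg_mem_iff.1 (neg_mul (X 2 ^ n) ρ ▸ hρ ▸ hπ (r + 1) le_rfl))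
    set π' := π + Pi.single r (ρ * (X 0 * X 1))
    have hπ' : ∀ k ≤ r, π' k ∈ 𝔭 ^ (s - 2 * k) := fun k hk => by
      refine add_mem (hπ k (by omega)) ?_
      rcases eq_or_ne k r with rfl | hne
      · rw [Pi.single_eq_same]
        exact Ideal.pow_le_pow_right (by omega) (pow_add (𝔭) _ 2 ▸
          Ideal.mul_mem_mul hρmem (by simpa using X0_mul_X1_pow_mem 1))
      · rw [Pi.single_eq_of_ne hne]
        exact zero_mem _
    have hsum : ∀ G : MvPolynomial (Fin 3) K, ∑ k ∈ range (r + 1), π' k * xyFPow G t k =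
        ∑ k ∈ range (r + 1), π k * xyFPow G t k + ρ * G * xyFPow G t (r + 1) := fun G => by
      rw [sum_range_add_single_mul, mul_assoc, X0_mul_X1_mul_xyFPow G (by omega), mul_assoc]
    have h' : ∑ k ∈ range (r + 1), π' k * xyFPow (-X 2 ^ n) t k = 0 := by
      rw [hsum, ← h, sum_range_succ _ (r + 1), hρ]
      ring
    have hres : ρ * (-X 2 ^ n - F) ∈ 𝔭 ^ (s + 1 - 2 * (r + 1)) := by
      refine Ideal.pow_le_pow_right (show _ ≤ s - 2 * (r + 1) + 1 by omega) ?_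
      rw [pow_succ]
      refine Ideal.mul_mem_mul hρmem ?_
      simpa [sub_eq_add_neg, add_comm] using neg_mem hG
    have hsplit : ∑ k ∈ range (r + 2), π k * xyFPow F t k =
        ∑ k ∈ range (r + 1), π' k * xyFPow F t k + ρ * (-X 2 ^ n - F) * xyFPow F t (r + 1) := by
      rw [hsum, sum_range_succ _ (r + 1), hρ]
      ring
    rw [hsplit]
    exact add_mem (ih (by omega) hπ' h') (mul_xyFPow_mem_mixedIdeal hrt hres)

lemma sum_mul_xyFPow_sub_mem {n : ℕ} {F : MvPolynomial (Fin 3) K} (hG : F + X 2 ^ n ∈ 𝔭)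
    {s t : ℕ} {π : ℕ → MvPolynomial (Fin 3) K} (hπ : ∀ k, π k ∈ 𝔭 ^ (s - 2 * k)) :
    ∑ k ∈ range (t + 1), π k * xyFPow F t k - ∑ k ∈ range (t + 1), π k * xyFPow (-X 2 ^ n) t k
      ∈ 𝔭 ^ (s + 1) := by
  rw [← sum_sub_distrib]
  refine Ideal.sum_mem _ fun k _ => ?_
  refine Ideal.pow_le_pow_right (show s + 1 ≤ s - 2 * k + (2 * k + 1) by omega) ?_
  rw [← mul_sub, pow_add]
  exact Ideal.mul_mem_mul (hπ k) (xyFPow_sub_xyFPow_mem hG t k)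

lemma isWeightedHomogeneous_sum_mul_xyFPow {n s t : ℕ} {π : ℕ → MvPolynomial (Fin 3) K}
    (hπ : ∀ k, 2 * k ≤ s → (π k).IsWeightedHomogeneous xyWeight (s - 2 * k))
    (hπ₀ : ∀ k, s < 2 * k → π k = 0) :
    (∑ k ∈ range (t + 1), π k * xyFPow (-X 2 ^ n) t k).IsWeightedHomogeneous xyWeight s := by
  have hw : (-X 2 ^ n : MvPolynomial (Fin 3) K).IsWeightedHomogeneous xyWeight 0 := by
    simpa [xyWeight] using ((isWeightedHomogeneous_X K xyWeight 2).pow n).neg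
  have hxy : (X 0 * X 1 : MvPolynomial (Fin 3) K).IsWeightedHomogeneous xyWeight 2 := by
    simpa [xyWeight] using
      (isWeightedHomogeneous_X K xyWeight 0).mul (isWeightedHomogeneous_X K xyWeight 1)
  refine IsWeightedHomogeneous.sum _ _ _ fun k _ => ?_
  rcases le_or_gt (2 * k) s with hk | hk
  · rw [xyFPow]
    convert (hπ k hk).mul ((hxy.pow k).mul (hw.pow (t - k))) using 1
    simp only [smul_eq_mul, mul_zero, add_zero]
    omega
  · simpa [hπ₀ k hk] using isWeightedHomogeneous_zero K xyWeight s

theorem mixedIdeal_inf_pow_succ_le [IsDomain K] {n : ℕ} {F : MvPolynomial (Fin 3) K}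
    (hG : F + X 2 ^ n ∈ 𝔭) (s t : ℕ) :
    mixedIdeal F s t ⊓ 𝔭 ^ (s + 1) ≤ mixedIdeal F (s + 1) t := by
  rintro g ⟨hg, hgs⟩
  obtain ⟨c, hc, rfl⟩ := mem_mixedIdeal_iff.1 hg
  -- `π k` is the part of `c k` of the least `(x, y)`-degree allowed in `𝔭 ^ (s - 2 * k)`
  set π : ℕ → MvPolynomial (Fin 3) K := fun k =>
    if 2 * k ≤ s then weightedHomogeneousComponent xyWeight (s - 2 * k) (c k) else 0
  have hπ : ∀ k, π k ∈ 𝔭 ^ (s - 2 * k) := fun k => by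
    by_cases hk : 2 * k ≤ s
    · simpa [π, hk] using weightedHomogeneousComponent_mem_span_X0_X1_pow _ _
    · simp [π, hk]
  have hcπ : ∀ k, c k - π k ∈ 𝔭 ^ (s + 1 - 2 * k) := fun k => by
    by_cases hk : 2 * k ≤ s
    · simpa [π, hk, show s + 1 - 2 * k = s - 2 * k + 1 by omega] using
        sub_weightedHomogeneousComponent_mem (hc k)
    · simp [show s + 1 - 2 * k = 0 by omega]
  have hhigh : ∑ k ∈ range (t + 1), (c k - π k) * xyFPow F t k ∈ mixedIdeal F (s + 1) t :=
    mem_mixedIdeal_iff.2 ⟨_, hcπ, rfl⟩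
  have hsplit : ∑ k ∈ range (t + 1), c k * xyFPow F t k =
      ∑ k ∈ range (t + 1), (c k - π k) * xyFPow F t k +
        ∑ k ∈ range (t + 1), π k * xyFPow F t k := by
    rw [← sum_add_distrib]
    exact sum_congr rfl fun k _ => by ring
  have hH : ∑ k ∈ range (t + 1), π k * xyFPow (-X 2 ^ n) t k ∈ 𝔭 ^ (s + 1) := by
    have := sub_mem (sub_mem hgs (mixedIdeal_le_pow F (s + 1) t hhigh))
      (sum_mul_xyFPow_sub_mem (t := t) hG hπ)
    rwa [hsplit, add_sub_cancel_left, sub_sub_cancel] at this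
  have hHhom := isWeightedHomogeneous_sum_mul_xyFPow (n := n) (s := s) (t := t) (π := π)
    (fun k hk => by simpa [π, hk] using weightedHomogeneousComponent_isWeightedHomogeneous _ _)
    (fun k hk => by simp [π, hk.not_ge])
  rw [hsplit]
  exact add_mem hhigh <| sum_mul_xyFPow_mem_mixedIdeal_succ hG le_rfl (fun k _ => hπ k)
    (eq_zero_of_isWeightedHomogeneous_of_mem hHhom hH)

theorem pow_inf_span_pow_eq_mixedIdeal [IsDomain K] {n : ℕ} {F : MvPolynomial (Fin 3) K}
    (hG : F + X 2 ^ n ∈ 𝔭) (s t : ℕ) :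
    𝔭 ^ s ⊓ Ideal.span {X 0 * X 1, F} ^ t = mixedIdeal F s t := by
  refine le_antisymm ?_ (le_inf (mixedIdeal_le_pow F s t) (mixedIdeal_le_span_pow F s t))
  induction s with
  | zero => exact inf_le_right.trans (mixedIdeal_zero F t).ge
  | succ s ih =>
    refine le_trans ?_ (mixedIdeal_inf_pow_succ_le hG s t)
    exact le_inf (le_trans (inf_le_inf_right _ (Ideal.pow_le_pow_right s.le_succ)) ih) inf_le_left

lemma pow_inf_span_pow_mul_le (F : MvPolynomial (Fin 3) K) (α β : ℕ) :
    (𝔭 ^ α ⊓ Ideal.span {X 0 * X 1, F} ^ α) * (𝔭 ^ β ⊓ Ideal.span {X 0 * X 1, F} ^ β) ≤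
      𝔭 ^ (α + β) ⊓ Ideal.span {X 0 * X 1, F} ^ (α + β) := by
  rw [pow_add, pow_add]
  exact le_inf (Ideal.mul_mono inf_le_left inf_le_left) (Ideal.mul_mono inf_le_right inf_le_right)

lemma exists_add_eq_and_sub_add_sub_le {α β k : ℕ} (h : Even α ∨ Even β) (hk : k ≤ α + β) :
    ∃ k₁ k₂, k₁ + k₂ = k ∧ k₁ ≤ α ∧ k₂ ≤ β ∧ (α - 2 * k₁) + (β - 2 * k₂) ≤ α + β - 2 * k := by
  rcases h with ⟨a, rfl⟩ | ⟨b, rfl⟩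
  · exact ⟨max (min k a) (k - β), k - max (min k a) (k - β), by omega, by omega, by omega, by omega⟩
  · exact ⟨k - max (min k b) (k - α), max (min k b) (k - α), by omega, by omega, by omega, by omega⟩

theorem mixedIdeal_add_le_mul (F : MvPolynomial (Fin 3) K) {α β : ℕ} (h : Even α ∨ Even β) :
    mixedIdeal F (α + β) (α + β) ≤ mixedIdeal F α α * mixedIdeal F β β := by
  rw [mixedIdeal, Ideal.sum_eq_sup, Finset.sup_le_iff]
  intro k hk
  obtain ⟨k₁, k₂, rfl, h₁, h₂, hle⟩ :=
    exists_add_eq_and_sub_add_sub_le h (Nat.le_of_lt_succ (mem_range.1 hk))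
  calc 𝔭 ^ (α + β - 2 * (k₁ + k₂)) * Ideal.span {xyFPow F (α + β) (k₁ + k₂)}
      ≤ (𝔭 ^ (α - 2 * k₁) * Ideal.span {xyFPow F α k₁}) *
          (𝔭 ^ (β - 2 * k₂) * Ideal.span {xyFPow F β k₂}) := by
        rw [mul_mul_mul_comm, ← pow_add, Ideal.span_singleton_mul_span_singleton,
          ← xyFPow_add F h₁ h₂]
        exact Ideal.mul_mono_left (Ideal.pow_le_pow_right hle)
    _ ≤ mixedIdeal F α α * mixedIdeal F β β :=
        Ideal.mul_mono (le_mixedIdeal F α h₁) (le_mixedIdeal F β h₂)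

theorem pow_inf_span_pow_add_eq_mul [IsDomain K] {n : ℕ} {F : MvPolynomial (Fin 3) K}
    (hG : F + X 2 ^ n ∈ 𝔭) {α β : ℕ} (h : Even α ∨ Even β) :
    𝔭 ^ (α + β) ⊓ Ideal.span {X 0 * X 1, F} ^ (α + β) =
      (𝔭 ^ α ⊓ Ideal.span {X 0 * X 1, F} ^ α) * (𝔭 ^ β ⊓ Ideal.span {X 0 * X 1, F} ^ β) := by
  refine le_antisymm ?_ (pow_inf_span_pow_mul_le F α β)
  simp only [pow_inf_span_pow_eq_mixedIdeal hG]
  exact mixedIdeal_add_le_mul F h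

lemma pow_mul_span_xyFPow_le {n : ℕ} {F : MvPolynomial (Fin 3) K} (hG : F + X 2 ^ n ∈ 𝔭)
    (hn : 1 ≤ n) {e j k : ℕ} (h : k < j ∧ 2 * j ≤ e + 2 * k ∨ 2 * j + 1 ≤ e + 2 * k) :
    𝔭 ^ e * Ideal.span {xyFPow F (2 * j) k} ≤
      𝔭 ^ (2 * j + 1) ⊔ Ideal.span {X 2 ^ (n * j + 1)} := by
  rw [Ideal.mul_le]
  intro a ha b hb
  obtain ⟨c, rfl⟩ := Ideal.mem_span_singleton'.1 hb
  have hmem : ∀ m, 2 * j + 1 ≤ e + m → ∀ p ∈ 𝔭 ^ m, a * (c * p) ∈ 𝔭 ^ (2 * j + 1) :=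
    fun m hm p hp => Ideal.pow_le_pow_right hm <| pow_add (𝔭) e m ▸
      Ideal.mul_mem_mul ha (Ideal.mul_mem_left _ c hp)
  rcases h with ⟨hkj, hjk⟩ | hjk
  · have hw : a * (c * xyFPow (-X 2 ^ n) (2 * j) k) ∈ Ideal.span {X 2 ^ (n * j + 1)} := by
      refine Ideal.mem_span_singleton.2 (Dvd.dvd.mul_left (Dvd.dvd.mul_left ?_ _) _)
      rw [xyFPow, neg_pow, ← pow_mul]
      have hdeg : n * j + 1 ≤ n * (2 * j - k) :=
        calc n * j + 1 ≤ n * (j + 1) := by rw [mul_add_one]; omega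
          _ ≤ n * (2 * j - k) := Nat.mul_le_mul_left n (by omega)
      exact Dvd.dvd.mul_left (Dvd.dvd.mul_left (pow_dvd_pow _ hdeg) _) _
    rw [← sub_add_cancel (xyFPow F (2 * j) k) (xyFPow (-X 2 ^ n) (2 * j) k), mul_add, mul_add]
    exact add_mem (Ideal.mem_sup_left (hmem _ (by omega) _ (xyFPow_sub_xyFPow_mem hG _ _)))
      (Ideal.mem_sup_right hw)
  · exact Ideal.mem_sup_left (hmem _ hjk _ (xyFPow_mem F _ _))

theorem mixedIdeal_mul_le_of_odd {n : ℕ} {F : MvPolynomial (Fin 3) K} (hG : F + X 2 ^ n ∈ 𝔭)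
    (hn : 1 ≤ n) {α β j : ℕ} (hα : Odd α) (hβ : Odd β) (hj : α + β = 2 * j) :
    mixedIdeal F α α * mixedIdeal F β β ≤ 𝔭 ^ (2 * j + 1) ⊔ Ideal.span {X 2 ^ (n * j + 1)} := by
  rw [mixedIdeal, mixedIdeal, sum_mul_sum, Ideal.sum_eq_sup, Finset.sup_le_iff]
  intro k₁ hk₁
  rw [Ideal.sum_eq_sup, Finset.sup_le_iff]
  intro k₂ hk₂
  have h₁ := Nat.le_of_lt_succ (mem_range.1 hk₁)
  have h₂ := Nat.le_of_lt_succ (mem_range.1 hk₂)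
  rw [mul_mul_mul_comm, ← pow_add, Ideal.span_singleton_mul_span_singleton, ← xyFPow_add F h₁ h₂,
    hj]
  refine pow_mul_span_xyFPow_le hG hn ?_
  obtain ⟨a, rfl⟩ := hα
  obtain ⟨b, rfl⟩ := hβ
  omega

theorem xyFPow_notMem [Nontrivial K] {n : ℕ} {F : MvPolynomial (Fin 3) K} (hG : F + X 2 ^ n ∈ 𝔭)
    (j : ℕ) : xyFPow F (2 * j) j ∉ 𝔭 ^ (2 * j + 1) ⊔ Ideal.span {X 2 ^ (n * j + 1)} := by
  intro h
  have hw := sub_mem h (Ideal.mem_sup_left (xyFPow_sub_xyFPow_mem hG (2 * j) j))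
  rw [sub_sub_cancel, xyFPow, show 2 * j - j = j by omega, neg_pow, ← pow_mul,
    mul_left_comm] at hw
  have := Ideal.mul_mem_left _ ((-1) ^ j) hw
  rw [← mul_assoc, ← mul_pow, neg_one_mul, neg_neg, one_pow, one_mul] at this
  exact X0_mul_X1_pow_mul_X_two_pow_notMem j (n * j) this

theorem pow_inf_span_pow_mul_lt [IsDomain K] {n : ℕ} {F : MvPolynomial (Fin 3) K}
    (hG : F + X 2 ^ n ∈ 𝔭) (hn : 1 ≤ n) {α β : ℕ} (hα : Odd α) (hβ : Odd β) :
    (𝔭 ^ α ⊓ Ideal.span {X 0 * X 1, F} ^ α) * (𝔭 ^ β ⊓ Ideal.span {X 0 * X 1, F} ^ β) <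
      𝔭 ^ (α + β) ⊓ Ideal.span {X 0 * X 1, F} ^ (α + β) := by
  obtain ⟨j, hj⟩ : ∃ j, α + β = 2 * j := (hα.add_odd hβ).exists_two_nsmul _
  refine lt_of_le_of_ne (pow_inf_span_pow_mul_le F α β) fun heq => ?_
  have hmem : xyFPow F (α + β) j ∈ 𝔭 ^ (α + β) ⊓ Ideal.span {X 0 * X 1, F} ^ (α + β) := by
    rw [pow_inf_span_pow_eq_mixedIdeal hG, ← one_mul (xyFPow F _ j)]
    exact mul_xyFPow_mem_mixedIdeal (by omega) (by simp [hj])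
  rw [← heq, pow_inf_span_pow_eq_mixedIdeal hG, pow_inf_span_pow_eq_mixedIdeal hG, hj] at hmem
  exact xyFPow_notMem hG j (mixedIdeal_mul_le_of_odd hG hn hα hβ hj hmem)

lemma add_X_two_pow_mem (n : ℕ) (a b : Fin n → K) :
    X 2 ^ n - ∏ i : Fin n, (X 2 - C (b i) * X 0) - ∏ i : Fin n, (X 2 - C (a i) * X 1) + X 2 ^ n
      ∈ 𝔭 := by
  have hX : ∀ i : Fin 3, i = 0 ∨ i = 1 → Ideal.Quotient.mk (𝔭) (X i) = 0 := fun i hi =>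
    Ideal.Quotient.eq_zero_iff_mem.2 (Ideal.subset_span (by rcases hi with rfl | rfl <;> simp))
  rw [← Ideal.Quotient.eq_zero_iff_mem]
  simp [hX 0 (.inl rfl), hX 1 (.inr rfl)]

end NearlyCompleteIntersection

open NearlyCompleteIntersection in
theorem stmt_18_general {K : Type*} [Field K] (n : ℕ) (hn : 1 ≤ n)
    (a b : Fin n → K)
    (F : MvPolynomial (Fin 3) K)
    (hF : F = X 2 ^ n - ∏ i : Fin n, (X 2 - MvPolynomial.C (b i) * X 0)
        - ∏ i : Fin n, (X 2 - MvPolynomial.C (a i) * X 1))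
    (Isym : ℕ → Ideal (MvPolynomial (Fin 3) K))
    (hIsym : ∀ m, Isym m =
      Ideal.span {X 0, X 1} ^ m ⊓ Ideal.span {X 0 * X 1, F} ^ m)
    (α β : ℕ) :
    (Even α ∨ Even β → Isym (α + β) = Isym α * Isym β) ∧
      (Odd α ∧ Odd β → Isym α * Isym β < Isym (α + β)) := by
  have hG : F + X 2 ^ n ∈ Ideal.span {X 0, X 1} := hF ▸ add_X_two_pow_mem n a b
  simp only [hIsym]
  exact ⟨pow_inf_span_pow_add_eq_mul hG, fun ⟨hα, hβ⟩ => pow_inf_span_pow_mul_lt hG hn hα hβ⟩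

theorem stmt_18 {K : Type*} [Field K] (n : ℕ) (hn : 1 ≤ n)
    (a b : Fin n → K) (ha : Function.Injective a) (hb : Function.Injective b)
    (ha0 : ∀ i, a i ≠ 0) (hb0 : ∀ i, b i ≠ 0)
    (F : MvPolynomial (Fin 3) K)
    (hF : F = X 2 ^ n - ∏ i : Fin n, (X 2 - MvPolynomial.C (b i) * X 0)
        - ∏ i : Fin n, (X 2 - MvPolynomial.C (a i) * X 1))
    (Isym : ℕ → Ideal (MvPolynomial (Fin 3) K))
    (hIsym : ∀ m, Isym m =
      Ideal.span {X 0, X 1} ^ m ⊓ Ideal.span {X 0 * X 1, F} ^ m)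
    (α β : ℕ) (hα : 1 ≤ α) (hβ : 1 ≤ β) :
    (Even α ∨ Even β → Isym (α + β) = Isym α * Isym β) ∧
      (Odd α ∧ Odd β → Isym α * Isym β < Isym (α + β)) :=
  stmt_18_general n hn a b F hF Isym hIsym α β
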